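/- For every fixed f ∈ A_r, the function z ↦ |f|_z is continuous on the closed disk {z ∈ ℂ : |z| ≤ r}. In particular, for f ≠ 0 one has |f|_z = |f(z)|^{log r / log |z|} → r^{ord_0(f)} = |f|_0 as z → 0. -/

import Mathlib

/-!
Write `N = ord₀ f` and `f(z) = z^N g(z)` with `g(z) = Σ_{m ≥ 0} a_{N+m} z^m`. The majorant
`Σ ‖a_n‖_hyb rⁿ` makes `g` continuous on the closed disk, with `g(0) = a_N ≠ 0`. Since
`|z|^(log r / log |z|) = r`, the factor `z^N` contributes exactly `r^N`, so that
`|f|_z = r^N |g(z)|^(log r / log |z|)` for `z ≠ 0`; the exponent tends to `0` as `z → 0`,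
which gives the limit `r^N = |f|_0`.
-/

open scoped Classical

/-- The hybrid norm on `ℂ`: `‖z‖_hyb = max {1, |z|}` for `z ≠ 0`, and `‖0‖_hyb = 0`. -/
noncomputable def hybNorm (z : ℂ) : ℝ := if z = 0 then 0 else max 1 (‖z‖)

/-- `f ∈ A_r`:  a formal Laurent series `f = Σ aₙ tⁿ ∈ ℂ((t))` belongs to `A_r` when
`Σₙ ‖aₙ‖_hyb rⁿ < ∞`. -/
def memAr (r : ℝ) (f : LaurentSeries ℂ) : Prop :=
  Summable (fun n : ℤ => hybNorm (f.coeff n) * r ^ n)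

/-- The evaluation `ev_z(f) = f(z) = Σₙ aₙ zⁿ` of a formal Laurent series at `z ≠ 0`. -/
noncomputable def evalAr (z : ℂ) (f : LaurentSeries ℂ) : ℂ :=
  ∑' n : ℤ, f.coeff n * z ^ n

/-- The seminorm `|·|_z` on `A_r` for `z` in the closed disk of radius `r`:
`|f|_z = |f(z)| ^ (log r / log |z|)` for `0 < |z| ≤ r`, and
`|f|₀ = r^(ord₀ f)` for `f ≠ 0`, `|0|₀ = 0` at `z = 0`. -/
noncomputable def seminormAt (r : ℝ) (z : ℂ) (f : LaurentSeries ℂ) : ℝ :=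
  if z = 0 then (if f = 0 then 0 else r ^ (HahnSeries.order f))
  else (‖evalAr z f‖) ^ (Real.log r / Real.log (‖z‖))

open Filter Topology Real

namespace Real

/-- Continuity at `x = 0` holds because of the junk value `log 0 = 0`. -/
theorem continuousAt_inv_log {x : ℝ} (h1 : x ≠ 1) (h2 : x ≠ -1) :
    ContinuousAt (fun x => (log x)⁻¹) x := by
  rcases eq_or_ne x 0 with rfl | h0
  · rw [← continuousWithinAt_compl_self, ContinuousWithinAt, log_zero, inv_zero]
    exact tendsto_inv_atBot_zero.comp tendsto_log_nhdsNE_zero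
  · exact (continuousAt_log h0).inv₀ (log_ne_zero.mpr ⟨h0, h1, h2⟩)

theorem continuousAt_logb_base {b : ℝ} (x : ℝ) (h1 : b ≠ 1) (h2 : b ≠ -1) :
    ContinuousAt (fun b => logb b x) b := by
  simpa only [logb, div_eq_mul_inv] using (continuousAt_inv_log h1 h2).const_mul (log x)

end Real

namespace PowerSeries

variable {𝕜 : Type*} [NormedField 𝕜]

noncomputable def tsumEval (p : PowerSeries 𝕜) (z : 𝕜) : 𝕜 :=
  ∑' m : ℕ, coeff m p * z ^ m

theorem tsumEval_zero (p : PowerSeries 𝕜) : tsumEval p 0 = coeff 0 p := by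
  rw [tsumEval, tsum_eq_single 0 fun m hm => by simp [zero_pow hm]]
  simp

theorem continuousOn_tsumEval [CompleteSpace 𝕜] {p : PowerSeries 𝕜} {r : ℝ}
    (hp : Summable fun m : ℕ => ‖coeff m p‖ * r ^ m) :
    ContinuousOn (tsumEval p) {z : 𝕜 | ‖z‖ ≤ r} := by
  refine continuousOn_tsum (fun m => (continuous_const.mul (continuous_pow m)).continuousOn)
    hp fun m z hz => ?_
  rw [norm_mul, norm_pow]
  exact mul_le_mul_of_nonneg_left (pow_le_pow_left₀ (norm_nonneg z) hz m) (norm_nonneg _)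

end PowerSeries

theorem norm_le_hybNorm (z : ℂ) : ‖z‖ ≤ hybNorm z := by
  unfold hybNorm
  split_ifs with hz
  · simp [hz]
  · exact le_max_right _ _

theorem memAr.summable_norm_powerSeriesPart_coeff {r : ℝ} (hr : 0 < r) {f : LaurentSeries ℂ}
    (hf : memAr r f) :
    Summable fun m : ℕ => ‖PowerSeries.coeff m f.powerSeriesPart‖ * r ^ m := by
  have hshift : Summable fun m : ℕ => hybNorm (f.coeff (f.order + m)) * r ^ m := by
    refine ((hf.comp_injective ((add_right_injective f.order).comp Nat.cast_injective)).mul_right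
      (r ^ (-f.order))).congr fun m => ?_
    simp only [Function.comp_apply, zpow_add₀ hr.ne', zpow_neg, zpow_natCast]
    field_simp
  refine hshift.of_nonneg_of_le (fun m => by positivity) fun m => ?_
  rw [LaurentSeries.powerSeriesPart_coeff]
  exact mul_le_mul_of_nonneg_right (norm_le_hybNorm _) (by positivity)

theorem evalAr_eq_zpow_order_mul (f : LaurentSeries ℂ) {z : ℂ} (hz : z ≠ 0) :
    evalAr z f = z ^ f.order * f.powerSeriesPart.tsumEval z := by
  have hinj : Function.Injective fun m : ℕ => f.order + m :=
    (add_right_injective f.order).comp Nat.cast_injective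
  have hsupp : Function.support (fun n : ℤ => f.coeff n * z ^ n) ⊆
      Set.range fun m : ℕ => f.order + m := by
    intro n hn
    have hle := HahnSeries.order_le_of_coeff_ne_zero (left_ne_zero_of_mul hn)
    exact ⟨(n - f.order).toNat, show f.order + ((n - f.order).toNat : ℤ) = n by omega⟩
  rw [evalAr, PowerSeries.tsumEval, ← tsum_mul_left, ← hinj.tsum_eq hsupp]
  refine tsum_congr fun m => ?_
  rw [LaurentSeries.powerSeriesPart_coeff, zpow_add₀ hz, zpow_natCast]
  ring

theorem seminormAt_zero_right {r : ℝ} (hr0 : 0 < r) (hr1 : r ≠ 1) {z : ℂ} (hz : ‖z‖ ≠ 1) :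
    seminormAt r z 0 = 0 := by
  rcases eq_or_ne z 0 with rfl | hz0
  · simp [seminormAt]
  have hexp : log r / log ‖z‖ ≠ 0 :=
    div_ne_zero (log_ne_zero_of_pos_of_ne_one hr0 hr1)
      (log_ne_zero_of_pos_of_ne_one (norm_pos_iff.mpr hz0) hz)
  simp [seminormAt, evalAr, hz0, zero_rpow hexp]

/-- At `z = 0` this holds because `logb 0 r = 0`. -/
theorem seminormAt_eq_mul_rpow {r : ℝ} (hr : 0 < r) {f : LaurentSeries ℂ} (hf : f ≠ 0)
    {z : ℂ} (hz : ‖z‖ ≠ 1) :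
    seminormAt r z f = r ^ f.order * ‖f.powerSeriesPart.tsumEval z‖ ^ logb ‖z‖ r := by
  rcases eq_or_ne z 0 with rfl | hz0
  · simp [seminormAt, hf]
  have hz_pos : 0 < ‖z‖ := norm_pos_iff.mpr hz0
  rw [seminormAt, if_neg hz0, log_div_log, evalAr_eq_zpow_order_mul f hz0, norm_mul, norm_zpow,
    mul_rpow (by positivity) (norm_nonneg _), ← rpow_zpow_comm hz_pos.le, rpow_logb hz_pos hz hr]

/-- For every fixed `f ∈ A_r`, the function `z ↦ |f|_z` is continuous on the closed disk
`{z : |z| ≤ r}`.  In particular, for `f ≠ 0` one has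
`|f|_z = |f(z)|^(log r / log |z|) → r^(ord₀ f) = |f|₀` as `z → 0`. -/
theorem seminormAt_continuousOn (r : ℝ) (hr0 : 0 < r) (hr1 : r < 1)
    (f : LaurentSeries ℂ) (hf : memAr r f) :
    ContinuousOn (fun z : ℂ => seminormAt r z f) {z : ℂ | ‖z‖ ≤ r} := by
  have hdisk : ∀ z ∈ {z : ℂ | ‖z‖ ≤ r}, ‖z‖ < 1 := fun z hz => lt_of_le_of_lt hz hr1
  rcases eq_or_ne f 0 with rfl | hf0
  · exact continuousOn_const.congr fun z hz => seminormAt_zero_right hr0 hr1.ne (hdisk z hz).ne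
  refine ContinuousOn.congr ?_ fun z hz => seminormAt_eq_mul_rpow hr0 hf0 (hdisk z hz).ne
  have hexp : ContinuousOn (fun z : ℂ => logb ‖z‖ r) {z : ℂ | ‖z‖ ≤ r} := fun z hz =>
    ((continuousAt_logb_base r (hdisk z hz).ne (by linarith [norm_nonneg z])).comp
      continuous_norm.continuousAt).continuousWithinAt
  have hg := PowerSeries.continuousOn_tsumEval (hf.summable_norm_powerSeriesPart_coeff hr0)
  refine continuousOn_const.mul (hg.norm.rpow hexp ?_)
  intro z hz
  rcases eq_or_ne z 0 with rfl | hz0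
  · left
    rw [PowerSeries.tsumEval_zero, LaurentSeries.powerSeriesPart_coeff, Nat.cast_zero, add_zero,
      norm_ne_zero_iff]
    exact HahnSeries.coeff_order_eq_zero.not.mpr hf0
  · exact Or.inr (logb_pos_of_base_lt_one (norm_pos_iff.mpr hz0) (hdisk z hz) hr0 hr1)
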